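/- arXiv:1103.3890 — 3 statements merged into one kernel-verified Lean document; each statement's English description precedes it below -/
import Mathlib

section
/- The pair (P*, Q*) is a saddle point of the Monty Hall zero-sum game with value 2/3, where Q* = (1/6,1/6,1/6,1/6,1/6,1/6): for every mixed strategy P of Contestant and every mixed strategy Q of Host, E(P, Q*) ≤ E(P*, Q*) = 2/3 ≤ E(P*, Q). Consequently the value of the game is V = 2/3. -/
open Finset

/-- Contestant's payoff matrix for the Monty Hall zero-sum game.
Rows: 1SS,1SN,1NS,1NN,2SS,2SN,2NS,2NN,3SS,3SN,3NS,3NN.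
Columns: 1L,1R,2L,2R,3L,3R. -/
def C : Fin 12 → Fin 6 → ℝ :=
  ![![0,0,1,1,1,1],
    ![0,1,0,0,1,1],
    ![1,0,1,1,0,0],
    ![1,1,0,0,0,0],
    ![1,1,0,0,1,1],
    ![0,0,0,1,1,1],
    ![1,1,1,0,0,0],
    ![0,0,1,1,0,0],
    ![1,1,1,1,0,0],
    ![0,0,1,1,0,1],
    ![1,1,0,0,1,0],
    ![0,0,0,0,1,1]]

/-- A mixed strategy for Contestant. -/
def IsMixedC (P : Fin 12 → ℝ) : Prop := (∀ i, 0 ≤ P i) ∧ ∑ i, P i = 1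

/-- A mixed strategy for Host. -/
def IsMixedH (Q : Fin 6 → ℝ) : Prop := (∀ j, 0 ≤ Q j) ∧ ∑ j, Q j = 1

/-- Expected payoff (Contestant's winning probability) under profile (P,Q). -/
def E (P : Fin 12 → ℝ) (Q : Fin 6 → ℝ) : ℝ := ∑ i, ∑ j, P i * C i j * Q j

/-- Contestant's minimax strategy: the uniform mixture of 1SS, 2SS, 3SS. -/
noncomputable def Pstar : Fin 12 → ℝ := ![1/3, 0, 0, 0, 1/3, 0, 0, 0, 1/3, 0, 0, 0]

/-- Host's uniform minimax strategy. -/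
noncomputable def Qstar : Fin 6 → ℝ := ![1/6, 1/6, 1/6, 1/6, 1/6, 1/6]

/-! Against `Qstar` every pure strategy of Contestant wins in at most four of Host's six pure
strategies, and `Pstar` wins with two of its three pure strategies whatever Host does. As the
payoff is bilinear, these bounds on pure strategies carry over to all mixed ones, and together
they pin `E Pstar Qstar` to `2/3`. -/

section PureStrategies

variable {ι κ : Type*} [Fintype ι] [Fintype κ] {A : ι → κ → ℝ} {P : ι → ℝ} {Q : κ → ℝ} {v : ℝ}

theorem bilinear_le_of_row_payoffs_le (hP : ∀ i, 0 ≤ P i) (hP1 : ∑ i, P i = 1)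
    (h : ∀ i, ∑ j, A i j * Q j ≤ v) : ∑ i, ∑ j, P i * A i j * Q j ≤ v :=
  calc ∑ i, ∑ j, P i * A i j * Q j = ∑ i, P i * ∑ j, A i j * Q j := by
        simp_rw [mul_sum, mul_assoc]
    _ ≤ ∑ i, P i * v := sum_le_sum fun i _ => mul_le_mul_of_nonneg_left (h i) (hP i)
    _ = v := by rw [← sum_mul, hP1, one_mul]

theorem le_bilinear_of_column_payoffs_ge (hQ : ∀ j, 0 ≤ Q j) (hQ1 : ∑ j, Q j = 1)
    (h : ∀ j, v ≤ ∑ i, P i * A i j) : v ≤ ∑ i, ∑ j, P i * A i j * Q j :=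
  calc v = ∑ j, v * Q j := by rw [← mul_sum, hQ1, mul_one]
    _ ≤ ∑ j, (∑ i, P i * A i j) * Q j :=
        sum_le_sum fun j _ => mul_le_mul_of_nonneg_right (h j) (hQ j)
    _ = ∑ i, ∑ j, P i * A i j * Q j := by
        simp_rw [sum_mul]
        exact sum_comm

end PureStrategies

theorem isMixedC_Pstar : IsMixedC Pstar :=
  ⟨fun i => by fin_cases i <;> norm_num [Pstar], by norm_num [Pstar, Fin.sum_univ_succ]⟩

theorem isMixedH_Qstar : IsMixedH Qstar :=
  ⟨fun j => by fin_cases j <;> norm_num [Qstar], by norm_num [Qstar, Fin.sum_univ_succ]⟩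

theorem Pstar_column_payoff (j : Fin 6) : ∑ i, Pstar i * C i j = 2 / 3 := by
  fin_cases j <;> norm_num [Pstar, C, Fin.sum_univ_succ]

theorem row_payoff_Qstar_le (i : Fin 12) : ∑ j, C i j * Qstar j ≤ 2 / 3 := by
  fin_cases i <;> norm_num [Qstar, C, Fin.sum_univ_succ]

/-- (P*, Q*) is a saddle point of the Monty Hall zero-sum game with value 2/3. -/
theorem saddle_point_value :
    (∀ P : Fin 12 → ℝ, IsMixedC P → E P Qstar ≤ E Pstar Qstar) ∧
    E Pstar Qstar = 2/3 ∧
    (∀ Q : Fin 6 → ℝ, IsMixedH Q → 2/3 ≤ E Pstar Q) := by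
  have le_E_Pstar : ∀ Q : Fin 6 → ℝ, IsMixedH Q → 2 / 3 ≤ E Pstar Q := fun Q hQ =>
    le_bilinear_of_column_payoffs_ge hQ.1 hQ.2 fun j => (Pstar_column_payoff j).ge
  have E_Qstar_le : ∀ P : Fin 12 → ℝ, IsMixedC P → E P Qstar ≤ 2 / 3 := fun P hP =>
    bilinear_le_of_row_payoffs_le hP.1 hP.2 row_payoff_Qstar_le
  have value : E Pstar Qstar = 2 / 3 :=
    (E_Qstar_le Pstar isMixedC_Pstar).antisymm (le_E_Pstar Qstar isMixedH_Qstar)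
  exact ⟨fun P hP => value ▸ E_Qstar_le P hP, value, le_E_Pstar⟩
end

section
/- Characterization of Host's minimax strategies: a mixed strategy Q of Host satisfies E(P, Q) ≤ 2/3 for every mixed strategy P of Contestant if and only if Q 0 + Q 1 = 1/3, Q 2 + Q 3 = 1/3, and Q 4 + Q 5 = 1/3 (i.e., the car is hidden behind each door with probability 1/3, while the Left/Right preference probabilities λ₁, λ₂, λ₃ are arbitrary). -/
/-!
Since `E P Q` is linear in `P`, it suffices to bound Contestant's pure strategies. Each pure
strategy loses outright whenever the car is behind one particular door, so it wins with
probability at most one minus that door's probability, which is `2/3` when Host hides the car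
uniformly. Conversely, "pick door `d`, always switch" wins with probability exactly one minus
the probability of door `d`; if all of these are at most `2/3`, every door carries at least
`1/3`, hence exactly `1/3`.
-/

open Finset

open Matrix

theorem forall_simplex_dotProduct_le_iff {ι : Type*} [Fintype ι] [DecidableEq ι]
    (w : ι → ℝ) (v : ℝ) :
    (∀ P : ι → ℝ, (∀ i, 0 ≤ P i) → ∑ i, P i = 1 → P ⬝ᵥ w ≤ v) ↔ ∀ i, w i ≤ v := by
  constructor
  · intro h i
    simpa using h (Pi.single i 1) (fun j => by by_cases hj : j = i <;> simp [hj]) (by simp)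
  · intro hw P hP hP1
    calc P ⬝ᵥ w = ∑ i, P i * w i := rfl
      _ ≤ ∑ i, P i * v := sum_le_sum fun i _ => mul_le_mul_of_nonneg_left (hw i) (hP i)
      _ = v := by rw [← sum_mul, hP1, one_mul]

theorem E_eq_dotProduct_mulVec (P : Fin 12 → ℝ) (Q : Fin 6 → ℝ) : E P Q = P ⬝ᵥ (C *ᵥ Q) := by
  simp only [E, dotProduct, mulVec, mul_sum, mul_assoc]

theorem forall_E_le_iff (Q : Fin 6 → ℝ) (v : ℝ) :
    (∀ P, IsMixedC P → E P Q ≤ v) ↔ ∀ i, (C *ᵥ Q) i ≤ v := by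
  simp only [IsMixedC, E_eq_dotProduct_mulVec, and_imp]
  exact forall_simplex_dotProduct_le_iff _ v

/-- The probability that Host hides the car behind door `d + 1`. -/
def carProb (Q : Fin 6 → ℝ) : Fin 3 → ℝ := ![Q 0 + Q 1, Q 2 + Q 3, Q 4 + Q 5]

theorem sum_carProb (Q : Fin 6 → ℝ) : ∑ d, carProb Q d = ∑ j, Q j := by
  simp only [carProb, Fin.isValue, Fin.sum_univ_three, cons_val_zero, cons_val_one, Matrix.cons_val,
    Fin.sum_univ_six]
  ring

/-- Contestant's strategies 1SS, 2SS, 3SS. -/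
def alwaysSwitch : Fin 3 → Fin 12 := ![0, 4, 8]

theorem mulVec_alwaysSwitch_add_carProb (Q : Fin 6 → ℝ) (d : Fin 3) :
    (C *ᵥ Q) (alwaysSwitch d) + carProb Q d = ∑ j, Q j := by
  fin_cases d <;> simp [alwaysSwitch, carProb, C, mulVec, dotProduct, Fin.sum_univ_six] <;> ring

/-- A door such that the pure strategy `i` loses whenever the car is behind it. -/
def losingDoor : Fin 12 → Fin 3 := ![0, 1, 2, 1, 1, 0, 2, 0, 2, 0, 1, 0]

theorem mulVec_add_carProb_losingDoor_le {Q : Fin 6 → ℝ} (hQ : ∀ j, 0 ≤ Q j) (i : Fin 12) :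
    (C *ᵥ Q) i + carProb Q (losingDoor i) ≤ ∑ j, Q j := by
  fin_cases i <;> simp [losingDoor, carProb, C, mulVec, dotProduct, Fin.sum_univ_six] <;>
    linarith [hQ 0, hQ 1, hQ 2, hQ 3, hQ 4, hQ 5]

/-- Characterization of Host's minimax strategies: Q guarantees at most 2/3
iff the car is hidden behind each door with probability 1/3. -/
theorem host_minimax_iff :
    ∀ Q : Fin 6 → ℝ, IsMixedH Q →
      ((∀ P : Fin 12 → ℝ, IsMixedC P → E P Q ≤ 2/3) ↔
        (Q 0 + Q 1 = 1/3 ∧ Q 2 + Q 3 = 1/3 ∧ Q 4 + Q 5 = 1/3)) := by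
  intro Q ⟨hQ, hQ1⟩
  rw [forall_E_le_iff]
  trans ∀ d, carProb Q d = 1 / 3
  · constructor
    · intro h
      have hge : ∀ d, 1 / 3 ≤ carProb Q d := fun d => by
        linarith [h (alwaysSwitch d), mulVec_alwaysSwitch_add_carProb Q d]
      have hsum : ∑ _d : Fin 3, (1 / 3 : ℝ) = ∑ d, carProb Q d := by
        rw [sum_carProb, hQ1]; norm_num
      intro d
      exact ((sum_eq_sum_iff_of_le fun d _ => hge d).1 hsum d (mem_univ d)).symm
    · intro h i
      linarith [mulVec_add_carProb_losingDoor_le hQ i, h (losingDoor i)]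
  · simp [Fin.forall_fin_succ, carProb]
end

section
/- Unique minimizing door forces a pure best response: let Q be a fully supported mixed strategy of Host (Q j > 0 for all j) with π₁ = Q 0 + Q 1, π₂ = Q 2 + Q 3, π₃ = Q 4 + Q 5. If π₃ < π₁ and π₃ < π₂, then every best response P to Q is the pure strategy 3SS, i.e. P 8 = 1 and P i = 0 for i ≠ 8. (The analogous statements hold with doors permuted.) -/
open Finset

/-! A mixed strategy earns the `P`-average of the payoffs of the pure rows, so a best response
puts all its weight on rows of maximal payoff. The row 3SS wins exactly when the car is behind
door 1 or 2, i.e. with probability `π₁ + π₂`. When door 3 is the unique least likely door and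
every Host column has positive weight, a row-by-row comparison shows that every other row earns
strictly less. -/

section StrictMaximizer

variable {ι R : Type*} [Fintype ι] [Field R] [LinearOrder R] [IsStrictOrderedRing R]
  {P r : ι → R} {i₀ : ι}

theorem eq_zero_of_sum_mul_ge_of_lt (hP0 : ∀ i, 0 ≤ P i) (hP1 : ∑ i, P i = 1)
    (hlt : ∀ i, i ≠ i₀ → r i < r i₀) (hge : r i₀ ≤ ∑ i, P i * r i) :
    ∀ i, i ≠ i₀ → P i = 0 := by
  have hgap_nonneg : ∀ i ∈ univ, 0 ≤ P i * (r i₀ - r i) := fun i _ => by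
    by_cases hi : i = i₀
    · simp [hi]
    · exact mul_nonneg (hP0 i) (sub_nonneg.2 (hlt i hi).le)
  have hgap_sum : ∑ i, P i * (r i₀ - r i) = r i₀ - ∑ i, P i * r i := by
    simp only [mul_sub, sum_sub_distrib, ← sum_mul, hP1, one_mul]
  have hgap_zero := (sum_eq_zero_iff_of_nonneg hgap_nonneg).1
    (le_antisymm (by linarith) (sum_nonneg hgap_nonneg))
  intro i hi
  exact (mul_eq_zero.1 (hgap_zero i (mem_univ i))).resolve_right (sub_ne_zero.2 (hlt i hi).ne')

theorem eq_one_of_sum_mul_ge_of_lt (hP0 : ∀ i, 0 ≤ P i) (hP1 : ∑ i, P i = 1)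
    (hlt : ∀ i, i ≠ i₀ → r i < r i₀) (hge : r i₀ ≤ ∑ i, P i * r i) : P i₀ = 1 := by
  rw [← hP1, sum_eq_single i₀ (fun i _ hi => eq_zero_of_sum_mul_ge_of_lt hP0 hP1 hlt hge i hi)
    (fun h => absurd (mem_univ i₀) h)]

end StrictMaximizer

def rowPayoff (Q : Fin 6 → ℝ) (i : Fin 12) : ℝ := ∑ j, C i j * Q j

theorem E_eq_sum_mul_rowPayoff (P : Fin 12 → ℝ) (Q : Fin 6 → ℝ) :
    E P Q = ∑ i, P i * rowPayoff Q i := by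
  simp only [E, rowPayoff, mul_sum, mul_assoc]

theorem isMixedC_single (i : Fin 12) : IsMixedC (Pi.single i 1) :=
  ⟨fun k => by by_cases h : k = i <;> simp [h], by simp⟩

theorem E_single (i : Fin 12) (Q : Fin 6 → ℝ) : E (Pi.single i 1) Q = rowPayoff Q i := by
  simp [E_eq_sum_mul_rowPayoff, Pi.single_apply]

theorem rowPayoff_lt_rowPayoff_threeSS {Q : Fin 6 → ℝ} (hpos : ∀ j, 0 < Q j)
    (h31 : Q 4 + Q 5 < Q 0 + Q 1) (h32 : Q 4 + Q 5 < Q 2 + Q 3) :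
    ∀ i : Fin 12, i ≠ 8 → rowPayoff Q i < rowPayoff Q 8 := by
  intro i hi
  fin_cases i <;> simp [rowPayoff, C, Fin.sum_univ_six] at hi ⊢ <;>
    linarith [hpos 0, hpos 1, hpos 2, hpos 3, hpos 4, hpos 5]

/-- If door 3 is the unique least likely door under a fully supported Q, then
the unique best response is the pure strategy 3SS (row 8). -/
theorem unique_min_door_pure_best_response :
    ∀ (Q : Fin 6 → ℝ) (P : Fin 12 → ℝ), IsMixedH Q → IsMixedC P →
      (∀ j : Fin 6, Q j > 0) →
      Q 4 + Q 5 < Q 0 + Q 1 → Q 4 + Q 5 < Q 2 + Q 3 →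
      (∀ P' : Fin 12 → ℝ, IsMixedC P' → E P Q ≥ E P' Q) →
      P 8 = 1 ∧ ∀ i : Fin 12, i ≠ 8 → P i = 0 := by
  intro Q P _ ⟨hP0, hP1⟩ hpos h31 h32 hbest
  have hlt := rowPayoff_lt_rowPayoff_threeSS hpos h31 h32
  have hge : rowPayoff Q 8 ≤ ∑ i, P i * rowPayoff Q i := by
    rw [← E_single, ← E_eq_sum_mul_rowPayoff]
    exact hbest _ (isMixedC_single 8)
  exact ⟨eq_one_of_sum_mul_ge_of_lt hP0 hP1 hlt hge, eq_zero_of_sum_mul_ge_of_lt hP0 hP1 hlt hge⟩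
end
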